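/- Let 1 ≤ n < d, let E₀ ⊂ ℝ^d be an n-ADR set, and let E₂ ⊂ E₀ ∩ B(0,1) be an Hⁿ-measurable subset with Hⁿ(E₂) ≥ τ > 0 which satisfies the n-dimensional (θ,M)-property for some θ ∈ (0,1) and integer M ≥ 0. Then there exist a constant b ≥ 1 depending only on d, and an Hⁿ-measurable subset E₃ ⊂ E₂ with Hⁿ(E₃) ≥ c > 0 (c depending only on n, d, τ, M, θ and the ADR constants of E₀) such that E₃ satisfies the n-dimensional (θ/b, 0)-property. -/

import Mathlib

open MeasureTheory Metric Module Set
open scoped ENNReal NNReal RealInnerProductSpace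

noncomputable section

/-- Euclidean space `ℝ^d`. -/
abbrev Euc (d : ℕ) : Type := EuclideanSpace ℝ (Fin d)

/-- Orthogonal projection onto a subspace, as a map `ℝ^d → ℝ^d`. -/
noncomputable def projCLM {d : ℕ} (V : Submodule ℝ (Euc d)) : Euc d →L[ℝ] Euc d :=
  V.subtypeL.comp (Submodule.orthogonalProjectionOnto V)

/-- `E` is `n`-Ahlfors–David regular with constants `C₁ ≤ C₂`. -/
def IsADR {d : ℕ} (n : ℕ) (C₁ C₂ : ℝ) (E : Set (Euc d)) : Prop :=
  0 < C₁ ∧ C₁ ≤ C₂ ∧ ∀ x ∈ E, ∀ r : ℝ, 0 < r → ENNReal.ofReal r ≤ EMetric.diam E →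
    ENNReal.ofReal (C₁ * r ^ n) ≤ μH[n] (E ∩ closedBall x r) ∧
      μH[n] (E ∩ closedBall x r) ≤ ENNReal.ofReal (C₂ * r ^ n)

/-- `Γ` is an `n`-dimensional Lipschitz graph with Lipschitz constant at most `M`:
`Γ = {p + A p : p ∈ P}` for an `n`-dimensional subspace `P` and `M`-Lipschitz `A : P → P^⊥`. -/
def IsLipGraph {d : ℕ} (n : ℕ) (M : ℝ≥0) (Γ : Set (Euc d)) : Prop :=
  ∃ (P : Submodule ℝ (Euc d)) (A : P → Pᗮ), finrank ℝ P = n ∧ LipschitzWith M A ∧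
    Γ = {x | ∃ p : P, x = (p : Euc d) + (A p : Euc d)}

/-- `E` has big pieces of Lipschitz graphs with constants `M` and `δ`. -/
def HasBPLG {d : ℕ} (n : ℕ) (M : ℝ≥0) (δ : ℝ) (E : Set (Euc d)) : Prop :=
  0 < δ ∧ ∀ x ∈ E, ∀ r : ℝ, 0 < r → ENNReal.ofReal r ≤ EMetric.diam E →
    ∃ Γ : Set (Euc d), IsLipGraph n M Γ ∧
      ENNReal.ofReal (δ * r ^ n) ≤ μH[n] (E ∩ Γ ∩ closedBall x r)

/-- The coordinate subspace `ℝⁿ × {0} ⊆ ℝ^d`. -/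
def coordSubspace (d n : ℕ) : Submodule ℝ (Euc d) where
  carrier := {x | ∀ i : Fin d, n ≤ (i : ℕ) → x i = 0}
  add_mem' := by
    intro a b ha hb i hi
    simp [PiLp.add_apply, ha i hi, hb i hi]
  zero_mem' := by intro i hi; rfl
  smul_mem' := by
    intro c a ha i hi
    simp [PiLp.smul_apply, ha i hi]

/-- The closed ball of radius `ρ` around `W` in the Grassmannian `G(d,n)`, realised as a set
of subspaces of `ℝ^d`, with the metric `‖V - W‖ = ‖π_V - π_W‖` (operator norm). -/
def grBall {d : ℕ} (n : ℕ) (W : Submodule ℝ (Euc d)) (ρ : ℝ) : Set (Submodule ℝ (Euc d)) :=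
  {V | finrank ℝ V = n ∧ ‖projCLM V - projCLM W‖ ≤ ρ}

/-- The Borel σ-algebra on subspaces of `ℝ^d`, induced by `V ↦ π_V`. -/
instance grassMeasurableSpace (d : ℕ) : MeasurableSpace (Submodule ℝ (Euc d)) :=
  MeasurableSpace.comap (fun V => projCLM V) (borel (Euc d →L[ℝ] Euc d))

/-- The orthogonal group `O(d)`. -/
abbrev OG (d : ℕ) := Matrix.orthogonalGroup (Fin d) ℝ

instance (d : ℕ) : MeasurableSpace (OG d) := borel _

/-- `μ` is the Haar probability measure on the orthogonal group `O(d)`: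
a left-invariant Borel probability measure. -/
def IsHaarProb {d : ℕ} (μ : Measure (OG d)) : Prop :=
  IsProbabilityMeasure μ ∧ ∀ g : OG d, Measure.map (fun h => g * h) μ = μ

/-- The measure `γ_{d,n}` on the Grassmannian: the pushforward of the Haar probability
measure `μ` on `O(d)` under the map `g ↦ g(ℝⁿ × {0})`. -/
def grassmannOf {d : ℕ} (n : ℕ) (μ : Measure (OG d)) : Measure (Submodule ℝ (Euc d)) :=
  Measure.map
    (fun g : OG d => (coordSubspace d n).map
      (Matrix.toEuclideanLin (g : Matrix (Fin d) (Fin d) ℝ))) μ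

/-- The pushforward `π_{V♯}(Hⁿ|_E)` of `Hⁿ` restricted to `E` under the orthogonal
projection onto `V`. -/
def projPush {d : ℕ} (n : ℕ) (E : Set (Euc d)) (V : Submodule ℝ (Euc d)) : Measure (Euc d) :=
  Measure.map (projCLM V) (μH[n].restrict E)

/-- `Hⁿ` on the subspace `V`. -/
def hausdorffOn {d : ℕ} (n : ℕ) (V : Submodule ℝ (Euc d)) : Measure (Euc d) :=
  μH[n].restrict (V : Set (Euc d))

/-- The squared `L²(V)`-norm of the Radon–Nikodym derivative of `π_{V♯}(Hⁿ|_E)` with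
respect to `Hⁿ` on `V`. -/
def pushL2sq {d : ℕ} (n : ℕ) (E : Set (Euc d)) (V : Submodule ℝ (Euc d)) : ℝ≥0∞ :=
  ∫⁻ z, ((projPush n E V).rnDeriv (hausdorffOn n V) z) ^ 2 ∂(hausdorffOn n V)

/-- `π_{V♯}(Hⁿ|_E) ∈ L²(V)`: the pushforward is absolutely continuous with respect to `Hⁿ`
on `V`, with square-integrable density. -/
def MemL2 {d : ℕ} (n : ℕ) (E : Set (Euc d)) (V : Submodule ℝ (Euc d)) : Prop :=
  projPush n E V ≪ hausdorffOn n V ∧ pushL2sq n E V < ∞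

/-- The (two-sided) cone `X(x, V, α) = {y : |π_{V^⊥}(x - y)| ≤ α |x - y|}`. -/
def cone {d : ℕ} (V : Submodule ℝ (Euc d)) (x : Euc d) (α : ℝ) : Set (Euc d) :=
  {y | ‖projCLM Vᗮ (x - y)‖ ≤ α * ‖x - y‖}

/-- The truncated cone `X(x, V, α, R, r)`. -/
def coneAnn {d : ℕ} (V : Submodule ℝ (Euc d)) (x : Euc d) (α R r : ℝ) : Set (Euc d) :=
  cone V x α ∩ (closedBall x R \ ball x r)

/-- The vertical cone `X(x, α) := X(x, {0} × ℝ^{d-n}, α) = {y : |π_{ℝⁿ×{0}}(x-y)| ≤ α|x-y|}`. -/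
def vertCone {d : ℕ} (n : ℕ) (x : Euc d) (α : ℝ) : Set (Euc d) :=
  {y | ‖projCLM (coordSubspace d n) (x - y)‖ ≤ α * ‖x - y‖}

/-- The truncated vertical cone `X(x, α, R, r)`. -/
def vertConeAnn {d : ℕ} (n : ℕ) (x : Euc d) (α R r : ℝ) : Set (Euc d) :=
  vertCone n x α ∩ (closedBall x R \ ball x r)

/-- `E` satisfies the `n`-dimensional `(θ, M)`-property: for every `x ∈ E` at most `M`
dyadic scales `j` have `X(x, θ, 2^{-j}, 2^{-j-1}) ∩ E ≠ ∅`. -/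
def ThetaMProp {d : ℕ} (n : ℕ) (θ : ℝ) (M : ℕ) (E : Set (Euc d)) : Prop :=
  ∀ x ∈ E,
    {j : ℤ | (vertConeAnn n x θ (2 ^ (-j)) (2 ^ (-j - 1)) ∩ E).Nonempty}.Finite ∧
    {j : ℤ | (vertConeAnn n x θ (2 ^ (-j)) (2 ^ (-j - 1)) ∩ E).Nonempty}.ncard ≤ M

/-- The one-sided cone `X⁺(x, w, α)` in direction `w`. -/
def oneSidedCone {d : ℕ} (w : Euc d) (x : Euc d) (α : ℝ) : Set (Euc d) :=
  {y | ‖projCLM (Submodule.span ℝ {w})ᗮ (x - y)‖ ≤ α * ‖x - y‖ ∧ 0 ≤ ⟪y - x, w⟫}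

/-- The truncated one-sided cone `X⁺(x, w, α, R, r)`. -/
def oneSidedConeAnn {d : ℕ} (w : Euc d) (x : Euc d) (α R r : ℝ) : Set (Euc d) :=
  oneSidedCone w x α ∩ (closedBall x R \ ball x r)

/-- Combining `x ∈ ℝⁿ` and `y ∈ ℝ^{d-n}` into a point of `ℝ^d = ℝⁿ × ℝ^{d-n}`. -/
def pairFun {d n : ℕ} (x : Euc n) (y : Euc (d - n)) : Euc d :=
  WithLp.toLp 2 (fun i : Fin d => if h' : (i : ℕ) < n then x ⟨i, h'⟩ else y ⟨(i : ℕ) - n, by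
    have := i.isLt; omega⟩)

/-!
We take `b = 1`. Replace `E₂` by a compact `K ⊆ E₂` with `Hⁿ(K) ≥ τ/2` (possible because
`Hⁿ(E₂) < ∞`, `E₀` being ADR) and translate by a random `ω ∈ [0, 48)ᵈ`. A point `x ∈ K` is kept
if, at each of the at most `M` scales `j` at which `X(x, θ, 2^{-j}, 2^{-j-1})` meets `K`, every
coordinate of `x + ω` has vanishing binary digits at the positions `m + 1, m + 2, m + 3` for all
even `m ∈ [j - 3, j + d]`.

If `y ∈ X(x, θ, 2^{-j}, 2^{-j-1})` for two kept points, both see `K` at scale `j`, and some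
coordinate difference `D = |x_ℓ - y_ℓ|` satisfies `2^m D ∈ [1/8, 1/2)` for an even `m` in that
window. The fractional parts of `2^m (x_ℓ + ω_ℓ)` and `2^m (y_ℓ + ω_ℓ)` are both `< 1/8`, which
rules this out; so the kept points have the `(θ, 0)`-property.

Since the constrained positions are two apart, each of the at most `(d + 4) M` constraints on a
coordinate costs a factor `1/8`, so every `x ∈ K` is kept with probability at least
`(2^{-3(d+4)M} / 3)^d`, and by Fubini some `ω` keeps a set of at least that times `τ/2`.
-/

theorem exists_mul_le_measure_preimage_prodMk {α β : Type*} [MeasurableSpace α]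
    [MeasurableSpace β] {μ : Measure α} {ν : Measure β} [IsFiniteMeasure μ]
    [IsProbabilityMeasure ν] {s : Set (α × β)} (hs : MeasurableSet s) {a : ℝ≥0∞}
    (h : ∀ᵐ x ∂μ, a ≤ ν (Prod.mk x ⁻¹' s)) :
    ∃ y, a * μ univ ≤ μ ((·, y) ⁻¹' s) := by
  have hfin : ∫⁻ y, μ ((·, y) ⁻¹' s) ∂ν ≠ ∞ := by
    refine ne_top_of_le_ne_top (measure_ne_top μ univ) ?_
    calc ∫⁻ y, μ ((·, y) ⁻¹' s) ∂ν ≤ ∫⁻ _, μ univ ∂ν :=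
          lintegral_mono fun y => measure_mono (subset_univ _)
      _ = μ univ := by simp
  obtain ⟨y, hy⟩ := exists_lintegral_le hfin
  refine ⟨y, le_trans ?_ hy⟩
  calc a * μ univ = ∫⁻ _, a ∂μ := (lintegral_const a).symm
    _ ≤ ∫⁻ x, ν (Prod.mk x ⁻¹' s) ∂μ := lintegral_mono_ae h
    _ = ∫⁻ y, μ ((·, y) ⁻¹' s) ∂ν := by rw [← Measure.prod_apply hs, Measure.prod_apply_symm hs]

theorem exists_isCompact_subset_lt_measure {α : Type*} [MetricSpace α] [ProperSpace α]
    [MeasurableSpace α] [BorelSpace α] {μ : Measure α} {s : Set α} (hs : MeasurableSet s)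
    (hsb : Bornology.IsBounded s) (hμs : μ s ≠ ∞) {r : ℝ≥0∞} (hr : r < μ s) :
    ∃ K ⊆ s, IsCompact K ∧ r < μ K := by
  have : IsFiniteMeasure (μ.restrict s) := isFiniteMeasure_restrict.2 hμs
  obtain ⟨K, hKs, hK, hrK⟩ := hs.exists_lt_isClosed_of_ne_top (μ := μ.restrict s)
    (by rwa [Measure.restrict_apply_self]) (by rwa [Measure.restrict_apply_self])
  rw [Measure.restrict_apply hK.measurableSet, inter_eq_left.2 hKs] at hrK
  exact ⟨K, hKs, Metric.isCompact_of_isClosed_isBounded hK (hsb.subset hKs), hrK⟩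

theorem IsADR.hausdorffMeasure_inter_closedBall_lt_top {d n : ℕ} {C₁ C₂ : ℝ} {E : Set (Euc d)}
    (hE : IsADR n C₁ C₂ E) {x : Euc d} (hx : x ∈ E) (r : ℝ) :
    μH[n] (E ∩ closedBall x r) < ∞ := by
  have hsingleton : ∀ s : Set (Euc d), s.Subsingleton → μH[n] s < ∞ := fun s hs =>
    (Measure.hausdorffMeasure_le_one_of_subsingleton hs (Nat.cast_nonneg n)).trans_lt
      ENNReal.one_lt_top
  obtain ⟨-, -, hball⟩ := hE
  rcases le_or_gt r 0 with hr | hr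
  · exact hsingleton _ ((subsingleton_closedBall x hr).anti inter_subset_right)
  rcases le_or_gt (ENNReal.ofReal r) (ediam E) with hrE | hrE
  · exact (hball x hx r hr hrE).2.trans_lt ENNReal.ofReal_lt_top
  rcases eq_or_ne (ediam E) 0 with h0 | h0
  · exact hsingleton _ ((ediam_eq_zero_iff.1 h0).anti inter_subset_left)
  have hfin : ediam E ≠ ∞ := (hrE.trans_le le_top).ne
  set R := (ediam E).toReal
  have hsub : E ∩ closedBall x r ⊆ E ∩ closedBall x R := fun y hy =>
    ⟨hy.1, mem_closedBall.2 (by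
      rw [dist_edist]; exact ENNReal.toReal_mono hfin (edist_le_ediam_of_mem hy.1 hx))⟩
  exact (measure_mono hsub).trans_lt ((hball x hx R (ENNReal.toReal_pos h0 hfin)
    (ENNReal.ofReal_toReal hfin).le).2.trans_lt ENNReal.ofReal_lt_top)

/-! ### Reals with vanishing binary digits -/

-- `Int.fract (2 ^ s * z) < 1 / 8` says that the binary digits of `z` at positions `s + 1`,
-- `s + 2`, `s + 3` after the point vanish.
def smallDigits (S : Finset ℤ) : Set ℝ :=
  {z | ∀ s ∈ S, Int.fract ((2 : ℝ) ^ s * z) < 1 / 8}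

lemma measurableSet_smallDigits (S : Finset ℤ) : MeasurableSet (smallDigits S) := by
  simp only [smallDigits, ofPred_forall]
  exact .biInter S.countable_toSet fun s _ =>
    measurableSet_lt (measurable_fract.comp (measurable_id.const_mul _)) measurable_const

lemma smallDigits_anti {S T : Finset ℤ} (h : S ⊆ T) : smallDigits T ⊆ smallDigits S :=
  fun _ hz s hs => hz s (h hs)

lemma fract_zpow_mul_lt_of_mem_Ico {s g : ℤ} {z : ℝ}
    (hz : z ∈ Ico ((g : ℝ) * 2 ^ (-s)) (g * 2 ^ (-s) + 2 ^ (-s - 3))) :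
    Int.fract ((2 : ℝ) ^ s * z) < 1 / 8 := by
  have h2s : (2 : ℝ) ^ s * 2 ^ (-s) = 1 := by rw [← zpow_add₀ two_ne_zero]; simp
  have h2s3 : (2 : ℝ) ^ s * 2 ^ (-s - 3) = 1 / 8 := by
    rw [← zpow_add₀ two_ne_zero, show s + (-s - 3) = -3 by ring]; norm_num
  have hsplit : (2 : ℝ) ^ s * z = g + 2 ^ s * (z - g * 2 ^ (-s)) := by
    linear_combination (g : ℝ) * h2s
  have hpos : (0 : ℝ) < 2 ^ s := zpow_pos two_pos s
  have h0 : 0 ≤ (2 : ℝ) ^ s * (z - g * 2 ^ (-s)) := mul_nonneg hpos.le (by linarith [hz.1])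
  have h1 : (2 : ℝ) ^ s * (z - g * 2 ^ (-s)) < 1 / 8 := by
    rw [← h2s3]; exact mul_lt_mul_of_pos_left (by linarith [hz.2]) hpos
  rw [hsplit, Int.fract_intCast_add, Int.fract_eq_self.2 ⟨h0, by linarith⟩]
  exact h1

lemma natCast_mul_le_measure_inter_Ico {μ : Measure ℝ} {Z : Set ℝ} (hZ : MeasurableSet Z)
    {t h : ℝ} {v : ℝ≥0∞} (hh : 0 ≤ h) (c : ℕ)
    (hv : ∀ i < c, v ≤ μ (Z ∩ Ico (t + i * h) (t + (i + 1) * h))) :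
    c * v ≤ μ (Z ∩ Ico t (t + c * h)) := by
  induction c with
  | zero => simp
  | succ c ih =>
    have hunion : Ico t (t + c * h) ∪ Ico (t + c * h) (t + (c + 1) * h) =
        Ico t (t + (c + 1 : ℕ) * h) := by
      push_cast; exact Ico_union_Ico_eq_Ico (by nlinarith [c.cast_nonneg (α := ℝ)]) (by linarith)
    rw [← hunion, inter_union_distrib_left, measure_union
      (Ico_disjoint_Ico_same.mono inter_subset_right inter_subset_right)
      (hZ.inter measurableSet_Ico), Nat.cast_succ, add_mul, one_mul]
    exact add_le_add (ih fun i hi => hv i (by omega)) (hv c (by omega))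

lemma ofReal_zpow_mul_le_volume_inter_Ico {Z : Set ℝ} (hZ : MeasurableSet Z) {p a : ℤ}
    (hpa : p ≤ a) {v : ℝ} (hv : 0 ≤ v) (hpiece : ∀ g : ℤ, ENNReal.ofReal v ≤
      volume (Z ∩ Ico ((g : ℝ) * 2 ^ (-a)) (g * 2 ^ (-a) + 2 ^ (-a - 3)))) (k : ℤ) :
    ENNReal.ofReal (2 ^ (a - p - 1) * v) ≤
      volume (Z ∩ Ico ((k : ℝ) * 2 ^ (-p)) (k * 2 ^ (-p) + 2 ^ (-p - 1))) := by
  rcases hpa.eq_or_lt with rfl | hpa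
  · refine le_trans ?_ ((hpiece k).trans (measure_mono (inter_subset_inter_right _
      (Ico_subset_Ico_right ?_))))
    · exact ENNReal.ofReal_le_ofReal (mul_le_of_le_one_left hv (by norm_num))
    · gcongr <;> norm_num
  obtain ⟨e, rfl⟩ : ∃ e : ℕ, a = p + 1 + e := ⟨(a - p - 1).toNat, by omega⟩
  have hpow : 0 < (2 : ℝ) ^ (-(p + 1 + e)) := zpow_pos two_pos _
  have h2e : ((2 ^ e : ℕ) : ℝ) = 2 ^ (p + 1 + e - p - 1) := by
    rw [show p + 1 + e - p - 1 = e by ring]; norm_cast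
  have hpiece_start : ∀ i : ℕ, (((k * 2 ^ (e + 1) + i : ℤ)) : ℝ) * 2 ^ (-(p + 1 + e)) =
      k * 2 ^ (-p) + i * 2 ^ (-(p + 1 + e)) := fun i => by
    have : (2 : ℝ) ^ (e + 1) * 2 ^ (-(p + 1 + e)) = 2 ^ (-p) := by
      rw [← zpow_natCast, ← zpow_add₀ two_ne_zero]; push_cast; ring_nf
    push_cast; linear_combination (k : ℝ) * this
  have hsum := natCast_mul_le_measure_inter_Ico (μ := volume) (t := k * 2 ^ (-p)) hZ hpow.le
    (2 ^ e) fun i _ => (hpiece (k * 2 ^ (e + 1) + i)).trans (measure_mono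
      (inter_subset_inter_right _ (Ico_subset_Ico (hpiece_start i).ge (by
        rw [hpiece_start i]
        have : (2 : ℝ) ^ (-(p + 1 + e) - 3) ≤ 2 ^ (-(p + 1 + e)) :=
          zpow_le_zpow_right₀ one_le_two (by omega)
        linarith))))
  rwa [← ENNReal.ofReal_natCast, ← ENNReal.ofReal_mul (Nat.cast_nonneg _), h2e,
    ← zpow_add₀ two_ne_zero, show p + 1 + e - p - 1 + -(p + 1 + e) = -p - 1 by ring] at hsum

-- Aligned half-intervals make the induction close: the set where the smallest constraint `a`
-- holds consists of aligned half-intervals of level `a + 2`, and the other constraints lie at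
-- positions `≥ a + 2`.
theorem le_volume_smallDigits_inter_Ico_dyadic (S : Finset ℤ)
    (hS : (S : Set ℤ).Pairwise fun s s' => 2 ≤ |s - s'|) (p : ℤ) (hp : ∀ s ∈ S, p ≤ s) (k : ℤ) :
    ENNReal.ofReal (2 ^ (-3 * (S.card : ℤ) - p - 1)) ≤
      volume (smallDigits S ∩ Ico ((k : ℝ) * 2 ^ (-p)) (k * 2 ^ (-p) + 2 ^ (-p - 1))) := by
  induction S using Finset.induction_on_min generalizing p k with
  | empty => simp [smallDigits]
  | insert a S ha ih =>
    have hgap : ∀ s ∈ S, a + 2 ≤ s := fun s hs => by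
      have h2 : 2 ≤ |a - s| :=
        hS (Finset.mem_insert_self a S) (Finset.mem_insert_of_mem hs) (ha s hs).ne
      rw [abs_sub_comm, abs_of_pos (sub_pos.2 (ha s hs))] at h2
      omega
    have hpiece : ∀ g : ℤ, ENNReal.ofReal (2 ^ (-3 * (S.card : ℤ) - a - 3)) ≤ volume
        (smallDigits (insert a S) ∩ Ico ((g : ℝ) * 2 ^ (-a)) (g * 2 ^ (-a) + 2 ^ (-a - 3))) := by
      intro g
      have hstart : ((4 * g : ℤ) : ℝ) * 2 ^ (-(a + 2)) = g * 2 ^ (-a) := by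
        rw [show -(a + 2) = -a + -2 by ring, zpow_add₀ two_ne_zero]; push_cast; norm_num; ring
      have := ih (hS.mono (by simp)) (a + 2) hgap (4 * g)
      rw [hstart, show -(a + 2) - 1 = -a - 3 by ring, show -3 * (S.card : ℤ) - (a + 2) - 1 =
        -3 * (S.card : ℤ) - a - 3 by ring] at this
      refine this.trans (measure_mono fun z hz => ⟨fun s hs => ?_, hz.2⟩)
      rcases Finset.mem_insert.1 hs with rfl | hs
      · exact fract_zpow_mul_lt_of_mem_Ico hz.2
      · exact hz.1 s hs
    have := ofReal_zpow_mul_le_volume_inter_Ico (measurableSet_smallDigits _)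
      (hp a (Finset.mem_insert_self a S)) (zpow_pos two_pos _).le hpiece k
    rw [Finset.card_insert_of_notMem fun h => (ha a h).false]
    rwa [← zpow_add₀ two_ne_zero,
      show a - p - 1 + (-3 * (S.card : ℤ) - a - 3) = -3 * ((S.card + 1 : ℕ) : ℤ) - p - 1 by
        push_cast; ring] at this

theorem le_volume_smallDigits_inter_Ico (S : Finset ℤ)
    (hS : (S : Set ℤ).Pairwise fun s s' => 2 ≤ |s - s'|) (p : ℤ) (hp : ∀ s ∈ S, p ≤ s) (a : ℝ) :
    ENNReal.ofReal (2 ^ (-3 * (S.card : ℤ) - p - 1)) ≤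
      volume (smallDigits S ∩ Ico a (a + 3 * 2 ^ (-p - 1))) := by
  set k : ℤ := ⌈a / 2 ^ (-p)⌉
  have hpos : (0 : ℝ) < 2 ^ (-p) := zpow_pos two_pos _
  have hhalf : (2 : ℝ) ^ (-p) = 2 * 2 ^ (-p - 1) := by
    rw [← zpow_one_add₀ two_ne_zero]; ring_nf
  have hk₁ : a ≤ k * 2 ^ (-p) := (div_le_iff₀ hpos).1 (Int.le_ceil _)
  have hk₂ : k * 2 ^ (-p) < a + 2 ^ (-p) := by
    have := (lt_div_iff₀ hpos).1 (sub_lt_iff_lt_add.2 (Int.ceil_lt_add_one (a / 2 ^ (-p))))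
    linarith
  exact (le_volume_smallDigits_inter_Ico_dyadic S hS p hp k).trans
    (measure_mono (inter_subset_inter_right _ (Ico_subset_Ico hk₁ (by linarith))))

lemma pairwise_two_le_abs_sub_of_even {S : Finset ℤ} (hS : ∀ s ∈ S, Even s) :
    (S : Set ℤ).Pairwise fun s s' => 2 ≤ |s - s'| := fun s hs s' hs' hne => by
  obtain ⟨a, rfl⟩ := hS s hs
  obtain ⟨b, rfl⟩ := hS s' hs'
  rw [le_abs]
  omega

/-! ### Cones at dyadic scales -/

def scaleWindow (d : ℕ) (j : ℤ) : Finset ℤ := (Finset.Icc (j - 3) (j + d)).filter Even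

lemma card_scaleWindow_le (d : ℕ) (j : ℤ) : (scaleWindow d j).card ≤ d + 4 :=
  (Finset.card_filter_le _ _).trans (by rw [Int.card_Icc]; omega)

lemma exists_even_zpow_mul_mem_Ico {D : ℝ} (hD : 0 < D) :
    ∃ m : ℤ, Even m ∧ 1 / 8 ≤ 2 ^ m * D ∧ 2 ^ m * D < 1 / 2 := by
  obtain ⟨k, hk₁, hk₂⟩ := exists_mem_Ico_zpow hD one_lt_two
  obtain ⟨m, hm, hm₁, hm₂⟩ : ∃ m : ℤ, Even m ∧ -k - 3 ≤ m ∧ m ≤ -k - 2 := by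
    rcases Int.even_or_odd (-k - 2) with h | ⟨t, ht⟩
    · exact ⟨_, h, by omega, le_rfl⟩
    · exact ⟨-k - 3, ⟨t, by omega⟩, le_rfl, by omega⟩
  have hpos : (0 : ℝ) < 2 ^ m := zpow_pos two_pos m
  refine ⟨m, hm, ?_, ?_⟩
  · calc (1 : ℝ) / 8 = 2 ^ (-3 : ℤ) := by norm_num
      _ ≤ 2 ^ (m + k) := zpow_le_zpow_right₀ one_le_two (by omega)
      _ = 2 ^ m * 2 ^ k := zpow_add₀ two_ne_zero m k
      _ ≤ 2 ^ m * D := mul_le_mul_of_nonneg_left hk₁ hpos.le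
  · calc 2 ^ m * D < 2 ^ m * 2 ^ (k + 1) := mul_lt_mul_of_pos_left hk₂ hpos
      _ = 2 ^ (m + k + 1) := by rw [← zpow_add₀ two_ne_zero, add_assoc]
      _ ≤ 2 ^ (-1 : ℤ) := zpow_le_zpow_right₀ one_le_two (by omega)
      _ = 1 / 2 := by norm_num

lemma abs_sub_lt_of_fract_lt {A B ε : ℝ} (hA : Int.fract A < ε) (hB : Int.fract B < ε)
    (hAB : |A - B| < 1 - ε) : |A - B| < ε := by
  have hfloor : ((⌊A⌋ - ⌊B⌋ : ℤ) : ℝ) = (A - B) - (Int.fract A - Int.fract B) := by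
    push_cast; rw [Int.fract, Int.fract]; ring
  have hsmall : |Int.fract A - Int.fract B| < ε := by
    rw [abs_sub_lt_iff]; constructor <;> linarith [Int.fract_nonneg A, Int.fract_nonneg B]
  have hzero : ⌊A⌋ - ⌊B⌋ = 0 := by
    have : |((⌊A⌋ - ⌊B⌋ : ℤ) : ℝ)| < 1 := by
      rw [hfloor]; linarith [abs_sub (A - B) (Int.fract A - Int.fract B)]
    exact Int.abs_lt_one_iff.1 (by exact_mod_cast this)
  rw [hzero, Int.cast_zero, eq_comm, sub_eq_zero] at hfloor
  rwa [hfloor]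

lemma exists_sq_norm_le_card_mul_sq {ι : Type*} [Fintype ι] [Nonempty ι]
    (z : EuclideanSpace ℝ ι) : ∃ i, ‖z‖ ^ 2 ≤ Fintype.card ι * z i ^ 2 := by
  obtain ⟨i, -, hi⟩ := Finset.exists_le_of_sum_le Finset.univ_nonempty
    (f := fun _ => ‖z‖ ^ 2 / Fintype.card ι) (g := fun i => z i ^ 2) (by
      rw [Finset.sum_const, Finset.card_univ, nsmul_eq_mul, mul_div_cancel₀ _ (by positivity),
        EuclideanSpace.norm_eq, Real.sq_sqrt (by positivity)]
      simp)
  exact ⟨i, by rwa [div_le_iff₀' (by positivity)] at hi⟩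

lemma exists_coord_mem_scaleWindow {d : ℕ} {z : Euc d} {j : ℤ} (hz₁ : 2 ^ (-j - 1) ≤ ‖z‖)
    (hz₂ : ‖z‖ ≤ 2 ^ (-j)) :
    ∃ ℓ : Fin d, ∃ m ∈ scaleWindow d j, 1 / 8 ≤ 2 ^ m * |z ℓ| ∧ 2 ^ m * |z ℓ| < 1 / 2 := by
  have hz : 0 < ‖z‖ := (zpow_pos two_pos _).trans_le hz₁
  have : Nonempty (Fin d) := by
    by_contra h
    rw [not_nonempty_iff] at h
    exact hz.ne' (by rw [Subsingleton.elim z 0, norm_zero])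
  obtain ⟨ℓ, hℓ⟩ := exists_sq_norm_le_card_mul_sq z
  rw [Fintype.card_fin] at hℓ
  set D := |z ℓ|
  have hDz : D ≤ ‖z‖ := by simpa using PiLp.norm_apply_le z ℓ
  have hD : 2 ^ (-j - d - 2) ≤ D := by
    have hd : (d : ℝ) ≤ (2 ^ (d + 1 : ℤ)) ^ 2 := by
      have : (d : ℝ) < 2 ^ d := by exact_mod_cast Nat.lt_two_pow_self
      rw [← zpow_natCast] at this
      nlinarith [zpow_le_zpow_right₀ (one_le_two : (1 : ℝ) ≤ 2) (by omega : (d : ℤ) ≤ d + 1),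
        one_le_zpow₀ (one_le_two : (1 : ℝ) ≤ 2) (by omega : (0 : ℤ) ≤ d + 1)]
    have hsplit : (2 : ℝ) ^ (-j - 1) = 2 ^ (-j - d - 2) * 2 ^ (d + 1 : ℤ) := by
      rw [← zpow_add₀ two_ne_zero]; ring_nf
    have hsq : ((2 : ℝ) ^ (-j - d - 2)) ^ 2 ≤ D ^ 2 := by
      have : (2 ^ (-j - d - 2) * 2 ^ (d + 1 : ℤ)) ^ 2 ≤ (2 ^ (d + 1 : ℤ)) ^ 2 * D ^ 2 := by
        rw [sq_abs]
        nlinarith [pow_le_pow_left₀ (zpow_pos two_pos (-j - 1)).le hz₁ 2, sq_nonneg (z ℓ)]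
      rw [mul_pow, mul_comm] at this
      exact le_of_mul_le_mul_left this (by positivity)
    exact (pow_le_pow_iff_left₀ (by positivity) (abs_nonneg _) two_ne_zero).1 hsq
  obtain ⟨m, hm, hm₁, hm₂⟩ := exists_even_zpow_mul_mem_Ico ((zpow_pos two_pos _).trans_le hD)
  have hm0 : (0 : ℝ) < 2 ^ m := zpow_pos two_pos m
  refine ⟨ℓ, m, Finset.mem_filter.2 ⟨Finset.mem_Icc.2 ⟨?_, ?_⟩, hm⟩, hm₁, hm₂⟩
  · have : (2 : ℝ) ^ (-3 : ℤ) ≤ 2 ^ (m + -j) := by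
      rw [zpow_add₀ two_ne_zero]
      calc (2 : ℝ) ^ (-3 : ℤ) = 1 / 8 := by norm_num
        _ ≤ 2 ^ m * D := hm₁
        _ ≤ 2 ^ m * 2 ^ (-j) := mul_le_mul_of_nonneg_left (hDz.trans hz₂) hm0.le
    have := (zpow_le_zpow_iff_right₀ one_lt_two).1 this
    omega
  · have : (2 : ℝ) ^ (m + (-j - d - 2)) < 2 ^ (-1 : ℤ) := by
      rw [zpow_add₀ two_ne_zero]
      calc (2 : ℝ) ^ m * 2 ^ (-j - d - 2) ≤ 2 ^ m * D := mul_le_mul_of_nonneg_left hD hm0.le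
        _ < 1 / 2 := hm₂
        _ = 2 ^ (-1 : ℤ) := by norm_num
    have := (zpow_lt_zpow_iff_right₀ one_lt_two).1 this
    omega

lemma mem_vertConeAnn {d n : ℕ} {x y : Euc d} {α R r : ℝ} :
    y ∈ vertConeAnn n x α R r ↔
      ‖projCLM (coordSubspace d n) (x - y)‖ ≤ α * ‖x - y‖ ∧ ‖x - y‖ ≤ R ∧ r ≤ ‖x - y‖ := by
  simp only [vertConeAnn, vertCone, mem_inter_iff, mem_sdiff, mem_closedBall, mem_ball, not_lt,
    mem_ofPred_eq, dist_eq_norm']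

lemma mem_vertConeAnn_comm {d n : ℕ} {x y : Euc d} {α R r : ℝ} :
    y ∈ vertConeAnn n x α R r ↔ x ∈ vertConeAnn n y α R r := by
  rw [mem_vertConeAnn, mem_vertConeAnn, ← neg_sub, map_neg, norm_neg, norm_neg]

lemma isClosed_setOf_mem_vertConeAnn (d n : ℕ) (α R r : ℝ) :
    IsClosed {p : Euc d × Euc d | p.2 ∈ vertConeAnn n p.1 α R r} := by
  simp only [mem_vertConeAnn, ofPred_and]
  have hsub : Continuous fun p : Euc d × Euc d => ‖p.1 - p.2‖ :=
    (continuous_fst.sub continuous_snd).norm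
  exact (isClosed_le (((projCLM _).continuous.comp (continuous_fst.sub continuous_snd)).norm)
    (continuous_const.mul hsub)).inter
      ((isClosed_le hsub continuous_const).inter (isClosed_le continuous_const hsub))

def coneHits {d : ℕ} (n : ℕ) (θ : ℝ) (K : Set (Euc d)) (j : ℤ) : Set (Euc d) :=
  {x | (vertConeAnn n x θ (2 ^ (-j)) (2 ^ (-j - 1)) ∩ K).Nonempty}

lemma isClosed_coneHits {d : ℕ} {K : Set (Euc d)} (hK : IsCompact K) (n : ℕ) (θ : ℝ) (j : ℤ) :
    IsClosed (coneHits n θ K j) := by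
  have := isCompact_iff_compactSpace.1 hK
  have himage : coneHits n θ K j =
      Prod.fst '' {p : Euc d × K |
        (p.2 : Euc d) ∈ vertConeAnn n p.1 θ (2 ^ (-j)) (2 ^ (-j - 1))} := by
    ext x
    simp [coneHits, Set.Nonempty, and_comm]
  rw [himage]
  exact isClosedMap_fst_of_compactSpace _ ((isClosed_setOf_mem_vertConeAnn d n θ _ _).preimage
    (continuous_fst.prodMk (continuous_subtype_val.comp continuous_snd)))

lemma neg_two_le_of_mem_coneHits {d n : ℕ} {θ : ℝ} {K : Set (Euc d)} {x : Euc d} {j : ℤ}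
    (hK : K ⊆ closedBall 0 1) (hx : x ∈ closedBall 0 1) (hj : x ∈ coneHits n θ K j) : -2 ≤ j := by
  obtain ⟨y, hy, hyK⟩ := hj
  have hxy : ‖x - y‖ ≤ 2 := by
    have := mem_closedBall_zero_iff.1 (hK hyK)
    have := mem_closedBall_zero_iff.1 hx
    linarith [norm_sub_le x y]
  have : (2 : ℝ) ^ (-j - 1) ≤ 2 ^ (1 : ℤ) := by
    rw [zpow_one]; exact (mem_vertConeAnn.1 hy).2.2.trans hxy
  have := (zpow_le_zpow_iff_right₀ one_lt_two).1 this
  omega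

lemma ThetaMProp.subset {d n M : ℕ} {θ : ℝ} {E F : Set (Euc d)} (hE : ThetaMProp n θ M E)
    (hFE : F ⊆ E) : ThetaMProp n θ M F := fun x hx => by
  have hsub : {j : ℤ | (vertConeAnn n x θ (2 ^ (-j)) (2 ^ (-j - 1)) ∩ F).Nonempty} ⊆
      {j : ℤ | (vertConeAnn n x θ (2 ^ (-j)) (2 ^ (-j - 1)) ∩ E).Nonempty} :=
    fun j ⟨y, hy, hyF⟩ => ⟨y, hy, hFE hyF⟩
  obtain ⟨hfin, hcard⟩ := hE x (hFE hx)
  exact ⟨hfin.subset hsub, (ncard_le_ncard hsub hfin).trans hcard⟩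

/-! ### The random translation -/

def keptSet {d : ℕ} (n : ℕ) (θ : ℝ) (K : Set (Euc d)) : Set (Euc d × (Fin d → ℝ)) :=
  {p | p.1 ∈ K ∧ ∀ j : ℤ, p.1 ∈ coneHits n θ K j →
    ∀ ℓ, p.1 ℓ + p.2 ℓ ∈ smallDigits (scaleWindow d j)}

lemma measurableSet_keptSet {d : ℕ} {K : Set (Euc d)} (hK : IsCompact K) (n : ℕ) (θ : ℝ) :
    MeasurableSet (keptSet n θ K) := by
  have hK' := hK.measurableSet
  have hC := fun j => (isClosed_coneHits hK n θ j).measurableSet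
  have hZ := fun j => measurableSet_smallDigits (scaleWindow d j)
  exact measurableSet_setOfPred.2 (by fun_prop (disch := first | exact hK' | apply hC | apply hZ))

theorem thetaMProp_zero_keptSet {d : ℕ} (n : ℕ) (θ : ℝ) (K : Set (Euc d)) (ω : Fin d → ℝ) :
    ThetaMProp n θ 0 {x | (x, ω) ∈ keptSet n θ K} := by
  intro x hx
  suffices h : {j : ℤ | (vertConeAnn n x θ (2 ^ (-j)) (2 ^ (-j - 1)) ∩
      {x | (x, ω) ∈ keptSet n θ K}).Nonempty} = ∅ by rw [h]; simp
  refine eq_empty_iff_forall_notMem.2 fun j ⟨y, hyx, hy⟩ => ?_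
  obtain ⟨hxK, hxkept⟩ := hx
  obtain ⟨hyK, hykept⟩ := hy
  have hxj : x ∈ coneHits n θ K j := ⟨y, hyx, hyK⟩
  have hyj : y ∈ coneHits n θ K j := ⟨x, mem_vertConeAnn_comm.1 hyx, hxK⟩
  obtain ⟨-, hxy₂, hxy₁⟩ := mem_vertConeAnn.1 hyx
  obtain ⟨ℓ, m, hm, h₁, h₂⟩ := exists_coord_mem_scaleWindow hxy₁ hxy₂
  have hdiff : |2 ^ m * (x ℓ + ω ℓ) - 2 ^ m * (y ℓ + ω ℓ)| = 2 ^ m * |(x - y) ℓ| := by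
    rw [← mul_sub, abs_mul, abs_of_pos (zpow_pos two_pos m), PiLp.sub_apply,
      add_sub_add_right_eq_sub]
  have := abs_sub_lt_of_fract_lt (hxkept j hxj ℓ m hm) (hykept j hyj ℓ m hm)
    (by rw [hdiff]; linarith)
  linarith

-- After any translation, `[0, 48)` contains an aligned half-interval of level `-5`, the lowest
-- position in `scaleWindow d j` for the scales `j ≥ -2` that occur inside the unit ball.
def shiftMeasure (d : ℕ) : Measure (Fin d → ℝ) :=
  Measure.pi fun _ => ProbabilityTheory.cond volume (Ico (0 : ℝ) 48)

instance (d : ℕ) : IsProbabilityMeasure (shiftMeasure d) :=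
  have := ProbabilityTheory.cond_isProbabilityMeasure_of_finite (μ := volume)
    (s := Ico (0 : ℝ) 48) (by simp) (by simp)
  Measure.pi.instIsProbabilityMeasure _

lemma le_cond_Ico_smallDigits_add (S : Finset ℤ)
    (hS : (S : Set ℤ).Pairwise fun s s' => 2 ≤ |s - s'|) (hS₅ : ∀ s ∈ S, -5 ≤ s) (a : ℝ) :
    ENNReal.ofReal (2 ^ (-3 * (S.card : ℤ) + 4) / 48) ≤
      ProbabilityTheory.cond volume (Ico (0 : ℝ) 48) {t | a + t ∈ smallDigits S} := by
  have hpre : Ico (0 : ℝ) 48 ∩ {t | a + t ∈ smallDigits S} =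
      (a + ·) ⁻¹' (smallDigits S ∩ Ico a (a + 3 * 2 ^ (-(-5 : ℤ) - 1))) := by
    ext t; norm_num [and_comm]
  rw [ProbabilityTheory.cond_apply measurableSet_Ico, hpre, measure_preimage_add, Real.volume_Ico,
    ENNReal.ofReal_div_of_pos (by norm_num), ENNReal.div_eq_inv_mul, sub_zero]
  gcongr
  rw [show -3 * (S.card : ℤ) + 4 = -3 * S.card - (-5) - 1 by ring]
  exact le_volume_smallDigits_inter_Ico S hS (-5) hS₅ a

theorem le_shiftMeasure_keptSet {d n M : ℕ} {θ : ℝ} {K : Set (Euc d)} (hK : K ⊆ closedBall 0 1)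
    (hKM : ThetaMProp n θ M K) {x : Euc d} (hx : x ∈ K) :
    ENNReal.ofReal (2 ^ (-3 * (((d + 4) * M : ℕ) : ℤ) + 4) / 48) ^ d ≤
      shiftMeasure d {ω | (x, ω) ∈ keptSet n θ K} := by
  obtain ⟨hfin, hcard⟩ := hKM x hx
  set S := hfin.toFinset.biUnion (scaleWindow d)
  have hwindow : ∀ j, x ∈ coneHits n θ K j → scaleWindow d j ⊆ S := fun j hj =>
    Finset.subset_biUnion_of_mem (scaleWindow d) (hfin.mem_toFinset.2 hj)
  have hScard : S.card ≤ (d + 4) * M := by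
    refine Finset.card_biUnion_le.trans ((Finset.sum_le_card_nsmul _ _ _
      fun j _ => card_scaleWindow_le d j).trans ?_)
    rw [smul_eq_mul, mul_comm, ← ncard_eq_toFinset_card _ hfin]
    exact Nat.mul_le_mul_left _ hcard
  have hSmem : ∀ s ∈ S, Even s ∧ -5 ≤ s := fun s hs => by
    obtain ⟨j, hj, hs⟩ := Finset.mem_biUnion.1 hs
    have := neg_two_le_of_mem_coneHits hK (hK hx) (hfin.mem_toFinset.1 hj)
    obtain ⟨hs, hseven⟩ := Finset.mem_filter.1 hs
    exact ⟨hseven, by linarith [(Finset.mem_Icc.1 hs).1]⟩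
  have hcoord : ∀ ℓ ∈ (Finset.univ : Finset (Fin d)),
      ENNReal.ofReal (2 ^ (-3 * (((d + 4) * M : ℕ) : ℤ) + 4) / 48) ≤
        ProbabilityTheory.cond volume (Ico (0 : ℝ) 48) {t | x ℓ + t ∈ smallDigits S} :=
    fun ℓ _ => le_trans (ENNReal.ofReal_le_ofReal (div_le_div_of_nonneg_right
      (zpow_le_zpow_right₀ one_le_two (by linarith [(Nat.cast_le (α := ℤ)).2 hScard]))
      (by norm_num))) (le_cond_Ico_smallDigits_add S
        (pairwise_two_le_abs_sub_of_even fun s hs => (hSmem s hs).1)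
        (fun s hs => (hSmem s hs).2) (x ℓ))
  have hsub : univ.pi (fun ℓ => {t | x ℓ + t ∈ smallDigits S}) ⊆ {ω | (x, ω) ∈ keptSet n θ K} :=
    fun ω hω => ⟨hx, fun j hj ℓ => smallDigits_anti (hwindow j hj) (hω ℓ (mem_univ ℓ))⟩
  calc _ ≤ ∏ ℓ : Fin d, ProbabilityTheory.cond volume (Ico (0 : ℝ) 48)
          {t | x ℓ + t ∈ smallDigits S} := by
        simpa using Finset.pow_card_le_prod _ _ _ hcoord
    _ = shiftMeasure d (univ.pi fun ℓ => {t | x ℓ + t ∈ smallDigits S}) :=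
      (Measure.pi_pi _ _).symm
    _ ≤ _ := measure_mono hsub

/-- the main proposition. A set with the `(θ, M)`-property contains a large
subset with the `(θ/b, 0)`-property, where `b ≥ 1` depends only on `d`. -/
theorem stmt4 (d : ℕ) :
    ∃ b : ℝ, 1 ≤ b ∧
      ∀ (n M : ℕ) (τ θ C₁ C₂ : ℝ), 1 ≤ n → n < d → 0 < τ → 0 < θ → θ < 1 →
        ∃ c : ℝ, 0 < c ∧
          ∀ E₀ E₂ : Set (Euc d), IsADR n C₁ C₂ E₀ → MeasurableSet E₂ →
            E₂ ⊆ E₀ ∩ closedBall 0 1 → ENNReal.ofReal τ ≤ μH[n] E₂ →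
            ThetaMProp n θ M E₂ →
            ∃ E₃ : Set (Euc d), MeasurableSet E₃ ∧ E₃ ⊆ E₂ ∧
              ENNReal.ofReal c ≤ μH[n] E₃ ∧ ThetaMProp n (θ / b) 0 E₃ := by
  refine ⟨1, le_rfl, fun n M τ θ C₁ C₂ _ _ hτ _ _ => ?_⟩
  set ρ : ℝ := 2 ^ (-3 * (((d + 4) * M : ℕ) : ℤ) + 4) / 48
  refine ⟨ρ ^ d * (τ / 2), by positivity, fun E₀ E₂ hE₀ hE₂ hE₂sub hτE₂ hE₂M => ?_⟩
  obtain ⟨x₀, hx₀⟩ : E₂.Nonempty :=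
    nonempty_of_measure_ne_zero ((ENNReal.ofReal_pos.2 hτ).trans_le hτE₂).ne'
  have hE₂ball : E₂ ⊆ closedBall 0 1 := hE₂sub.trans inter_subset_right
  have hE₂x₀ : E₂ ⊆ E₀ ∩ closedBall x₀ 2 := fun y hy => by
    refine ⟨(hE₂sub hy).1, mem_closedBall.2 ((dist_triangle_right y x₀ 0).trans ?_)⟩
    linarith [mem_closedBall.1 (hE₂ball hy), mem_closedBall.1 (hE₂ball hx₀)]
  have hE₂fin : μH[n] E₂ ≠ ∞ := ((measure_mono hE₂x₀).trans_lt
    (hE₀.hausdorffMeasure_inter_closedBall_lt_top (hE₂sub hx₀).1 2)).ne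
  obtain ⟨K, hKE₂, hK, hτK⟩ := exists_isCompact_subset_lt_measure hE₂
    (isBounded_closedBall.subset hE₂ball) hE₂fin
    (((ENNReal.ofReal_lt_ofReal_iff hτ).2 (half_lt_self hτ)).trans_le hτE₂)
  have : IsFiniteMeasure (μH[n].restrict K) :=
    isFiniteMeasure_restrict.2 (ne_top_of_le_ne_top hE₂fin (measure_mono hKE₂))
  have hkept := measurableSet_keptSet hK n θ
  obtain ⟨ω, hω⟩ := exists_mul_le_measure_preimage_prodMk (μ := μH[n].restrict K)
    (ν := shiftMeasure d) hkept
    (ae_restrict_of_forall_mem hK.measurableSet fun x hx =>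
      le_shiftMeasure_keptSet (hKE₂.trans hE₂ball) (hE₂M.subset hKE₂) hx)
  rw [Measure.restrict_apply_univ, Measure.restrict_apply (measurable_prodMk_right hkept),
    inter_eq_left.2 fun x hx => hx.1] at hω
  refine ⟨{x | (x, ω) ∈ keptSet n θ K}, measurable_prodMk_right hkept, fun x hx => hKE₂ hx.1,
    ?_, by simpa using thetaMProp_zero_keptSet n θ K ω⟩
  rw [ENNReal.ofReal_mul (by positivity), ENNReal.ofReal_pow (by positivity)]
  calc _ ≤ ENNReal.ofReal ρ ^ d * μH[n] K := by gcongr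
    _ ≤ _ := hω
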